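/- arXiv:1707.04844 — 7 statements merged into one kernel-verified Lean document; each statement's English description precedes it below -/
import Mathlib

section
/- For every integer n and every real number x, the infinite product G_n(x) = ∏_{j ≤ n} ((j−i)/(j+i))·((x−j−i)/(x−j+i)) (i.e. the limit as m → ∞ of the partial products over n−m ≤ j ≤ n) converges and equals (Γ(−i−n)/Γ(i−n)) · (Γ(x−n+i)/Γ(x−n−i)), where Γ is the complex Gamma function and i is the imaginary unit. -/
/-!
Writing `a = -i - n`, `b = i - n`, `c = x - n + i`, `d = x - n - i`, the partial product over
`n - m ≤ j ≤ n` is `∏_{k ≤ m} (b + k)/(a + k) · (d + k)/(c + k)`. By Euler's limit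
`Γ(s) = lim m^s m! / (s (s+1) ⋯ (s+m))`, this is `Γₘ(a)/Γₘ(b) · Γₘ(c)/Γₘ(d)` up to the factor
`m^(a - b + c - d)`, which is `1` because `a + c = b + d`.
-/

open Complex Filter Real

theorem Finset.prod_Icc_sub_eq_prod_range {M : Type*} [CommMonoid M] (f : ℤ → M) (n : ℤ)
    (m : ℕ) : ∏ j ∈ Finset.Icc (n - m) n, f j = ∏ k ∈ Finset.range (m + 1), f (n - k) := by
  refine Finset.prod_nbij' (fun j => (n - j).toNat) (fun k => n - k) ?_ ?_ ?_ ?_ ?_ <;>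
    intro j hj <;> simp only [Finset.mem_Icc, Finset.mem_range] at hj ⊢
  all_goals first | omega | (congr 1; omega)

namespace Complex

theorem Gamma_ne_zero_of_im_ne_zero {s : ℂ} (hs : s.im ≠ 0) : Gamma s ≠ 0 :=
  Gamma_ne_zero fun m h => hs (by simp [h])

theorem GammaSeq_div_GammaSeq (a b : ℂ) (m : ℕ) :
    GammaSeq a m / GammaSeq b m =
      (m : ℂ) ^ a / (m : ℂ) ^ b * ∏ k ∈ Finset.range (m + 1), (b + k) / (a + k) := by
  have hfact : (m.factorial : ℂ) ≠ 0 := by exact_mod_cast m.factorial_ne_zero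
  rw [GammaSeq, GammaSeq, Finset.prod_div_distrib]
  field_simp

theorem cpow_div_cpow_mul_cpow_div_cpow {z : ℂ} (hz : z ≠ 0) {a b c d : ℂ}
    (habcd : a + c = b + d) : z ^ a / z ^ b * (z ^ c / z ^ d) = 1 := by
  rw [← cpow_sub _ _ hz, ← cpow_sub _ _ hz, ← cpow_add _ _ hz,
    show a - b + (c - d) = 0 by linear_combination habcd, cpow_zero]

theorem tendsto_prod_range_div_mul_div {a b c d : ℂ} (habcd : a + c = b + d)
    (hb : Gamma b ≠ 0) (hd : Gamma d ≠ 0) :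
    Tendsto (fun m : ℕ => ∏ k ∈ Finset.range (m + 1), (b + k) / (a + k) * ((d + k) / (c + k)))
      atTop (nhds (Gamma a / Gamma b * (Gamma c / Gamma d))) := by
  have hlim := ((GammaSeq_tendsto_Gamma a).div (GammaSeq_tendsto_Gamma b) hb).mul
    ((GammaSeq_tendsto_Gamma c).div (GammaSeq_tendsto_Gamma d) hd)
  refine hlim.congr' ?_
  filter_upwards [eventually_ne_atTop 0] with m hm
  have hpow := cpow_div_cpow_mul_cpow_div_cpow (Nat.cast_ne_zero.mpr hm) habcd
  rw [Pi.div_apply, Pi.div_apply, GammaSeq_div_GammaSeq, GammaSeq_div_GammaSeq, Finset.prod_mul_distrib]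
  linear_combination (∏ k ∈ Finset.range (m + 1), (b + k) / (a + k)) *
    (∏ k ∈ Finset.range (m + 1), (d + k) / (c + k)) * hpow

end Complex

/-- For every integer `n` and real `x`, the one-sided infinite product
`∏_{j ≤ n} ((j−i)/(j+i))·((x−j−i)/(x−j+i))`, i.e. the limit of the partial products over
`n − m ≤ j ≤ n` as `m → ∞`, converges and equals
`(Γ(−i−n)/Γ(i−n)) · (Γ(x−n+i)/Γ(x−n−i))`. -/
theorem product_eq_gamma (n : ℤ) (x : ℝ) :
    Tendsto
      (fun m : ℕ =>
        ∏ j ∈ Finset.Icc (n - m : ℤ) n,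
          (((j : ℂ) - I) / ((j : ℂ) + I)) * (((x : ℂ) - (j : ℂ) - I) / ((x : ℂ) - (j : ℂ) + I)))
      atTop
      (nhds ((Complex.Gamma (-I - (n : ℂ)) / Complex.Gamma (I - (n : ℂ))) *
        (Complex.Gamma ((x : ℂ) - (n : ℂ) + I) / Complex.Gamma ((x : ℂ) - (n : ℂ) - I)))) := by
  refine (tendsto_prod_range_div_mul_div (a := -I - n) (c := x - n + I) (by ring)
    (Gamma_ne_zero_of_im_ne_zero (by simp)) (Gamma_ne_zero_of_im_ne_zero (by simp))).congr
    fun m => ?_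
  rw [Finset.prod_Icc_sub_eq_prod_range]
  refine Finset.prod_congr rfl fun k _ => ?_
  push_cast
  rw [← neg_div_neg_eq]
  ring_nf
end

section
/- For every complex number x with Im x ≥ 0, the symmetric partial products ∏_{|j| ≤ N} ((j−i)/(j+i))·((x−j−i)/(x−j+i)) converge as N → ∞ to sin(π(i−x))/sin(π(i+x)). In particular the function G(x) := sin(π(i−x))/sin(π(i+x)) is periodic of period 1. -/
open Complex Filter Real

private lemma icc_int_succ (N : ℕ) :
    Finset.Icc (-((N : ℤ) + 1)) ((N : ℤ) + 1) =
      insert (-((N : ℤ) + 1)) (insert ((N : ℤ) + 1) (Finset.Icc (-(N : ℤ)) (N : ℤ))) := by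
  ext a
  simp only [Finset.mem_Icc, Finset.mem_insert]
  omega

private lemma prod_icc_succ (f : ℤ → ℂ) (N : ℕ) :
    ∏ j ∈ Finset.Icc (-((N : ℤ) + 1)) ((N : ℤ) + 1), f j
      = f (-((N : ℤ) + 1)) * f ((N : ℤ) + 1) * ∏ j ∈ Finset.Icc (-(N : ℤ)) (N : ℤ), f j := by
  rw [icc_int_succ, Finset.prod_insert, Finset.prod_insert, mul_assoc]
  · simp only [Finset.mem_Icc]; omega
  · simp only [Finset.mem_insert, Finset.mem_Icc]; omega

private lemma jI_ne (j : ℤ) : (j : ℂ) + I ≠ 0 := by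
  intro h
  have := congrArg Complex.im h
  simp at this

private lemma blaschke_const (N : ℕ) :
    ∏ j ∈ Finset.Icc (-(N : ℤ)) (N : ℤ), (((j : ℂ) - I) / ((j : ℂ) + I)) = -1 := by
  induction N with
  | zero => norm_num [Finset.Icc_self, Complex.div_I]
  | succ N ih =>
    have h : ((N : ℤ) + 1 : ℤ) = ((N + 1 : ℕ) : ℤ) := by push_cast; ring
    rw [show (-((N + 1 : ℕ) : ℤ)) = -((N : ℤ) + 1) by push_cast; ring,
      show (((N + 1 : ℕ) : ℤ)) = ((N : ℤ) + 1) by push_cast; ring,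
      prod_icc_succ (fun j => ((j : ℂ) - I) / ((j : ℂ) + I)) N, ih]
    have h1 : ((-((N : ℤ) + 1) : ℤ) : ℂ) = -((N : ℂ) + 1) := by push_cast; ring
    have h2 : ((((N : ℤ) + 1) : ℤ) : ℂ) = ((N : ℂ) + 1) := by push_cast; ring
    rw [h1, h2]
    have d1 : -((N : ℂ) + 1) + I ≠ 0 := by
      intro h; have := congrArg Complex.im h; simp at this
    have d2 : ((N : ℂ) + 1) + I ≠ 0 := by
      intro h; have := congrArg Complex.im h; simp at this
    have : (-((N : ℂ) + 1) - I) / (-((N : ℂ) + 1) + I) * (((N : ℂ) + 1 - I) / ((N : ℂ) + 1 + I))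
        = 1 := by
      rw [div_mul_div_comm, div_eq_one_iff_eq (mul_ne_zero d1 d2)]
      ring
    rw [this]; ring

private lemma poly_prod (w : ℂ) (N : ℕ) :
    ∏ j ∈ Finset.Icc (-(N : ℤ)) (N : ℤ), (w - (j : ℂ))
      = w * ∏ k ∈ Finset.range N, (w ^ 2 - ((k : ℂ) + 1) ^ 2) := by
  induction N with
  | zero => simp
  | succ N ih =>
    rw [show (-((N + 1 : ℕ) : ℤ)) = -((N : ℤ) + 1) by push_cast; ring,
      show (((N + 1 : ℕ) : ℤ)) = ((N : ℤ) + 1) by push_cast; ring,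
      prod_icc_succ (fun j => w - (j : ℂ)) N, ih, Finset.prod_range_succ]
    push_cast
    ring

/-- For `Im x ≥ 0`, the symmetric partial products
`∏_{|j| ≤ N} ((j−i)/(j+i))·((x−j−i)/(x−j+i))` converge to
`sin(π(i−x))/sin(π(i+x))`; moreover `G(x) = sin(π(i−x))/sin(π(i+x))` is `1`-periodic. -/
theorem symmetric_product_eq_sine_quotient (x : ℂ) (hx : 0 ≤ x.im) :
    Tendsto
      (fun N : ℕ =>
        ∏ j ∈ Finset.Icc (-(N : ℤ)) (N : ℤ),
          (((j : ℂ) - I) / ((j : ℂ) + I)) * ((x - (j : ℂ) - I) / (x - (j : ℂ) + I)))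
      atTop
      (nhds (Complex.sin ((π : ℂ) * (I - x)) / Complex.sin ((π : ℂ) * (I + x)))) ∧
    ∀ y : ℂ,
      Complex.sin ((π : ℂ) * (I - (y + 1))) / Complex.sin ((π : ℂ) * (I + (y + 1))) =
        Complex.sin ((π : ℂ) * (I - y)) / Complex.sin ((π : ℂ) * (I + y)) := by
  constructor
  · set w₁ : ℂ := x - I with hw₁
    set w₂ : ℂ := x + I with hw₂
    have hπ : (π : ℂ) ≠ 0 := by exact_mod_cast Real.pi_ne_zero
    -- sin (π w₂) ≠ 0
    have hsin2 : Complex.sin ((π : ℂ) * w₂) ≠ 0 := by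
      rw [Complex.sin_ne_zero_iff]
      intro k
      intro h
      have : w₂ = (k : ℂ) := mul_left_cancel₀ hπ (h.trans (mul_comm _ _))
      have h2 := congrArg Complex.im this
      rw [hw₂] at h2
      simp only [Complex.add_im, Complex.I_im, Complex.intCast_im] at h2
      linarith
    -- per-N closed form
    have key : ∀ N : ℕ,
        ∏ j ∈ Finset.Icc (-(N : ℤ)) (N : ℤ),
          (((j : ℂ) - I) / ((j : ℂ) + I)) * ((x - (j : ℂ) - I) / (x - (j : ℂ) + I))
        = -(((π : ℂ) * w₁ * ∏ k ∈ Finset.range N, (1 - w₁ ^ 2 / ((k : ℂ) + 1) ^ 2)) /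
            ((π : ℂ) * w₂ * ∏ k ∈ Finset.range N, (1 - w₂ ^ 2 / ((k : ℂ) + 1) ^ 2))) := by
      intro N
      rw [Finset.prod_mul_distrib, blaschke_const]
      have h1 : ∏ j ∈ Finset.Icc (-(N : ℤ)) (N : ℤ), ((x - (j : ℂ) - I) / (x - (j : ℂ) + I))
          = (∏ j ∈ Finset.Icc (-(N : ℤ)) (N : ℤ), (w₁ - (j : ℂ))) /
            (∏ j ∈ Finset.Icc (-(N : ℤ)) (N : ℤ), (w₂ - (j : ℂ))) := by
        rw [← Finset.prod_div_distrib]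
        apply Finset.prod_congr rfl
        intro j _
        rw [hw₁, hw₂]; ring_nf
      rw [h1, poly_prod, poly_prod]
      -- rewrite each quadratic factor
      have hc : ∀ w : ℂ, ∏ k ∈ Finset.range N, (w ^ 2 - ((k : ℂ) + 1) ^ 2)
          = (∏ k ∈ Finset.range N, (-((k : ℂ) + 1) ^ 2)) *
            ∏ k ∈ Finset.range N, (1 - w ^ 2 / ((k : ℂ) + 1) ^ 2) := by
        intro w
        rw [← Finset.prod_mul_distrib]
        apply Finset.prod_congr rfl
        intro k _
        have hk : ((k : ℂ) + 1) ^ 2 ≠ 0 := by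
          apply pow_ne_zero
          exact Nat.cast_add_one_ne_zero k
        field_simp
        ring
      rw [hc w₁, hc w₂]
      set C : ℂ := ∏ k ∈ Finset.range N, (-((k : ℂ) + 1) ^ 2) with hC
      have hCne : C ≠ 0 := by
        rw [hC]
        apply Finset.prod_ne_zero_iff.2
        intro k _
        apply neg_ne_zero.2
        apply pow_ne_zero
        exact Nat.cast_add_one_ne_zero k
      set A : ℂ := ∏ k ∈ Finset.range N, (1 - w₁ ^ 2 / ((k : ℂ) + 1) ^ 2)
      set B : ℂ := ∏ k ∈ Finset.range N, (1 - w₂ ^ 2 / ((k : ℂ) + 1) ^ 2)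
      have : w₁ * (C * A) / (w₂ * (C * B)) = ((π : ℂ) * w₁ * A) / ((π : ℂ) * w₂ * B) := by
        rw [show w₁ * (C * A) = C * (w₁ * A) by ring,
          show w₂ * (C * B) = C * (w₂ * B) by ring,
          mul_div_mul_left _ _ hCne,
          show (π : ℂ) * w₁ * A = (π : ℂ) * (w₁ * A) by ring,
          show (π : ℂ) * w₂ * B = (π : ℂ) * (w₂ * B) by ring,
          mul_div_mul_left _ _ hπ]
      rw [this]; ring
    have t1 := Complex.tendsto_euler_sin_prod w₁
    have t2 := Complex.tendsto_euler_sin_prod w₂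
    have tdiv := (t1.div t2 hsin2).neg
    have : Complex.sin ((π : ℂ) * (I - x)) / Complex.sin ((π : ℂ) * (I + x))
        = -(Complex.sin ((π : ℂ) * w₁) / Complex.sin ((π : ℂ) * w₂)) := by
      have e1 : (π : ℂ) * (I - x) = -((π : ℂ) * w₁) := by rw [hw₁]; ring
      have e2 : (π : ℂ) * (I + x) = (π : ℂ) * w₂ := by rw [hw₂]; ring
      rw [e1, e2, Complex.sin_neg, neg_div]
    rw [this]
    exact Tendsto.congr (fun N => (key N).symm) tdiv
  · intro y
    have e1 : (π : ℂ) * (I - (y + 1)) = (π : ℂ) * (I - y) - π := by ring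
    have e2 : (π : ℂ) * (I + (y + 1)) = (π : ℂ) * (I + y) + π := by ring
    rw [e1, e2, Complex.sin_sub, Complex.sin_add]
    simp [Complex.cos_pi, Complex.sin_pi, neg_div_neg_eq]
end

section
/- Let (a_j)_{j ≥ 0} be a sequence of complex numbers with |a_j| < 1 for all j. For n ≥ 0 define B_n(z) = ∏_{0 ≤ j < n} (z − a_j)/(1 − conj(a_j)·z) and φ_n(z) = B_n(z) · √(1−|a_n|²)/(1 − conj(a_n)·z). Then the functions φ_n form an orthonormal system on the unit circle: for all m, n ≥ 0, (1/2π) ∫_{0}^{2π} φ_n(e^{iθ}) · conj(φ_m(e^{iθ})) dθ equals 1 if m = n and 0 otherwise. -/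
/-!
On the unit circle `conj z = z⁻¹`, so Blaschke factors have modulus one and
`conj (1 - ā z)⁻¹ = z / (z - a)`. For `m < n` the product `φₙ · conj φₘ` is therefore `z · G z`
with `G` holomorphic on the closed disk, so by the mean value property its circle average is
`0 · G 0 = 0`. For `m = n` it is the Poisson kernel at `aₙ`, whose circle average is `1` by
Cauchy's formula. The case `m > n` follows by conjugation.
-/

open Complex Real MeasureTheory ComplexConjugate Metric

noncomputable section

def blaschkeFactor (a z : ℂ) : ℂ := (z - a) / (1 - conj a * z)

def blaschkeProduct (a : ℕ → ℂ) (n : ℕ) (z : ℂ) : ℂ :=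
  ∏ j ∈ Finset.range n, blaschkeFactor (a j) z

def malmquistTakenaka (a : ℕ → ℂ) (n : ℕ) (z : ℂ) : ℂ :=
  blaschkeProduct a n z * (√(1 - ‖a n‖ ^ 2) : ℂ) / (1 - conj (a n) * z)

end

lemma one_sub_conj_mul_ne_zero {a z : ℂ} (ha : ‖a‖ < 1) (hz : ‖z‖ ≤ 1) :
    1 - conj a * z ≠ 0 := by
  have : ‖conj a * z‖ < 1 := by
    rw [norm_mul, RCLike.norm_conj]
    nlinarith [norm_nonneg a, norm_nonneg z]
  exact sub_ne_zero.mpr fun h ↦ by simp [← h] at this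

lemma conj_one_sub_conj_mul {a z : ℂ} (hz : ‖z‖ = 1) :
    conj (1 - conj a * z) = (z - a) / z := by
  have hz₀ : z ≠ 0 := norm_ne_zero_iff.mp (by simp [hz])
  rw [map_sub, map_one, map_mul, conj_conj, ← inv_eq_conj hz]
  field_simp

lemma conj_inv_one_sub_conj_mul {a z : ℂ} (hz : ‖z‖ = 1) :
    conj (1 - conj a * z)⁻¹ = z / (z - a) := by
  rw [map_inv₀, conj_one_sub_conj_mul hz, inv_div]

lemma norm_blaschkeFactor {a z : ℂ} (ha : ‖a‖ < 1) (hz : ‖z‖ = 1) :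
    ‖blaschkeFactor a z‖ = 1 := by
  have hza : z - a ≠ 0 := sub_ne_zero.mpr fun h ↦ by simp [h] at hz; linarith
  have : ‖1 - conj a * z‖ = ‖z - a‖ := by
    rw [← RCLike.norm_conj, conj_one_sub_conj_mul hz, norm_div, hz, div_one]
  rw [blaschkeFactor, norm_div, this, div_self (norm_ne_zero_iff.mpr hza)]

lemma blaschkeProduct_mul_conj {a : ℕ → ℂ} (ha : ∀ j, ‖a j‖ < 1) {z : ℂ} (hz : ‖z‖ = 1)
    (n : ℕ) : blaschkeProduct a n z * conj (blaschkeProduct a n z) = 1 := by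
  rw [mul_conj', blaschkeProduct, norm_prod,
    Finset.prod_eq_one fun j _ ↦ norm_blaschkeFactor (ha j) hz]
  simp

lemma differentiableOn_inv_one_sub_conj_mul {a : ℂ} (ha : ‖a‖ < 1) :
    DifferentiableOn ℂ (fun z ↦ (1 - conj a * z)⁻¹) (closedBall 0 1) :=
  ((differentiableOn_const 1).sub ((differentiableOn_const _).mul differentiableOn_id)).inv
    fun z hz ↦ one_sub_conj_mul_ne_zero ha (by simpa using hz)

lemma differentiableOn_blaschkeFactor {a : ℂ} (ha : ‖a‖ < 1) :
    DifferentiableOn ℂ (blaschkeFactor a) (closedBall 0 1) :=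
  (differentiableOn_id.sub (differentiableOn_const a)).div
    ((differentiableOn_const 1).sub ((differentiableOn_const _).mul differentiableOn_id))
    fun z hz ↦ one_sub_conj_mul_ne_zero ha (by simpa using hz)

lemma circleAverage_conj (f : ℂ → ℂ) (c : ℂ) (R : ℝ) :
    circleAverage (fun z ↦ conj (f z)) c R = conj (circleAverage f c R) := by
  simp only [circleAverage_def, intervalIntegral.intervalIntegral_conj, Complex.real_smul, map_mul,
    conj_ofReal]

lemma circleAverage_zero_one_eq_integral_exp (f : ℂ → ℂ) :
    circleAverage f 0 1 = 1 / (2 * (π : ℂ)) * ∫ θ in 0..2 * π, f (exp (θ * I)) := by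
  simp [circleAverage_def, circleMap, Complex.real_smul]

-- `(1 - ‖a‖²) / |1 - ā z|²` is the Poisson kernel of the unit disk at `a`.
lemma circleAverage_poisson_eq_one {a : ℂ} (ha : ‖a‖ < 1) :
    circleAverage (fun z ↦ (1 - ‖a‖ ^ 2 : ℂ) *
      ((1 - conj a * z)⁻¹ * conj (1 - conj a * z)⁻¹)) 0 1 = 1 := by
  have hk : DiffContOnCl ℂ (fun z ↦ (1 - ‖a‖ ^ 2 : ℂ) * (1 - conj a * z)⁻¹) (ball 0 |1|) :=
    ((differentiableOn_const _).mul (differentiableOn_inv_one_sub_conj_mul ha)).diffContOnCl_ball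
      (by rw [abs_one])
  have hnorm : (1 - ‖a‖ ^ 2 : ℂ) ≠ 0 := by
    exact_mod_cast (by nlinarith [norm_nonneg a] : (1 - ‖a‖ ^ 2 : ℝ) ≠ 0)
  calc _ = circleAverage (fun z ↦ ((z - 0) / (z - a)) • ((1 - ‖a‖ ^ 2 : ℂ) * (1 - conj a * z)⁻¹))
        0 1 := circleAverage_congr_sphere fun z hz ↦ by
          rw [conj_inv_one_sub_conj_mul (by simpa using hz), smul_eq_mul, sub_zero]
          ring
    _ = 1 := by rw [hk.circleAverage_smul_div (by simpa using ha), conj_mul', mul_inv_cancel₀ hnorm]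

lemma blaschkeProduct_eq_mul_prod_Ico (a : ℕ → ℂ) {m n : ℕ} (hmn : m < n) (z : ℂ) :
    blaschkeProduct a n z = blaschkeProduct a m z * blaschkeFactor (a m) z *
      ∏ j ∈ Finset.Ico (m + 1) n, blaschkeFactor (a j) z := by
  rw [blaschkeProduct, blaschkeProduct, ← Finset.prod_range_mul_prod_Ico _ hmn.le,
    Finset.prod_eq_prod_Ico_succ_bot hmn, mul_assoc]

lemma malmquistTakenaka_mul_conj_self {a : ℕ → ℂ} (ha : ∀ j, ‖a j‖ < 1) {z : ℂ} (hz : ‖z‖ = 1)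
    (n : ℕ) : malmquistTakenaka a n z * conj (malmquistTakenaka a n z) =
      (1 - ‖a n‖ ^ 2 : ℂ) * ((1 - conj (a n) * z)⁻¹ * conj (1 - conj (a n) * z)⁻¹) := by
  simp only [malmquistTakenaka, div_eq_mul_inv, map_mul, conj_ofReal]
  set s : ℂ := ((√(1 - ‖a n‖ ^ 2) : ℝ) : ℂ)
  set k := (1 - conj (a n) * z)⁻¹
  have hs : s * s = 1 - ‖a n‖ ^ 2 := by
    rw [← ofReal_mul, Real.mul_self_sqrt (by nlinarith [ha n, norm_nonneg (a n)])]
    push_cast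
    ring
  linear_combination (s * s * k * conj k) * blaschkeProduct_mul_conj ha hz n + (k * conj k) * hs

lemma malmquistTakenaka_mul_conj_of_lt {a : ℕ → ℂ} (ha : ∀ j, ‖a j‖ < 1) {z : ℂ} (hz : ‖z‖ = 1)
    {m n : ℕ} (hmn : m < n) :
    malmquistTakenaka a n z * conj (malmquistTakenaka a m z) =
      z * ((√(1 - ‖a n‖ ^ 2) : ℝ) * (√(1 - ‖a m‖ ^ 2) : ℝ) *
        (∏ j ∈ Finset.Ico (m + 1) n, blaschkeFactor (a j) z) *
        ((1 - conj (a m) * z)⁻¹ * (1 - conj (a n) * z)⁻¹)) := by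
  have hza : z - a m ≠ 0 := sub_ne_zero.mpr fun h ↦ by simp [h] at hz; linarith [ha m]
  have hb : blaschkeFactor (a m) z * (z / (z - a m)) = z * (1 - conj (a m) * z)⁻¹ := by
    rw [blaschkeFactor]; field_simp
  simp only [malmquistTakenaka, blaschkeProduct_eq_mul_prod_Ico a hmn, div_eq_mul_inv (_ * _),
    map_mul, conj_ofReal, conj_inv_one_sub_conj_mul hz]
  set P := ∏ j ∈ Finset.Ico (m + 1) n, blaschkeFactor (a j) z
  set sm : ℂ := ((√(1 - ‖a m‖ ^ 2) : ℝ) : ℂ)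
  set sn : ℂ := ((√(1 - ‖a n‖ ^ 2) : ℝ) : ℂ)
  linear_combination (blaschkeFactor (a m) z * (z / (z - a m)) * P * sn * sm *
    (1 - conj (a n) * z)⁻¹) * blaschkeProduct_mul_conj ha hz m +
    (P * sn * sm * (1 - conj (a n) * z)⁻¹) * hb

lemma circleAverage_malmquistTakenaka_mul_conj_of_lt {a : ℕ → ℂ} (ha : ∀ j, ‖a j‖ < 1)
    {m n : ℕ} (hmn : m < n) :
    circleAverage (fun z ↦ malmquistTakenaka a n z * conj (malmquistTakenaka a m z)) 0 1 = 0 := by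
  rw [circleAverage_congr_sphere fun z hz ↦
    malmquistTakenaka_mul_conj_of_lt ha (by simpa using hz) hmn]
  refine (DiffContOnCl.circleAverage ?_).trans (zero_mul _)
  refine DifferentiableOn.diffContOnCl_ball (U := closedBall 0 1) ?_ (by rw [abs_one])
  have hb := fun j ↦ differentiableOn_blaschkeFactor (ha j)
  have hkm := differentiableOn_inv_one_sub_conj_mul (ha m)
  have hkn := differentiableOn_inv_one_sub_conj_mul (ha n)
  fun_prop

theorem circleAverage_malmquistTakenaka_mul_conj {a : ℕ → ℂ} (ha : ∀ j, ‖a j‖ < 1) (m n : ℕ) :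
    circleAverage (fun z ↦ malmquistTakenaka a n z * conj (malmquistTakenaka a m z)) 0 1 =
      if m = n then 1 else 0 := by
  rcases lt_trichotomy m n with hmn | rfl | hmn
  · rw [if_neg hmn.ne, circleAverage_malmquistTakenaka_mul_conj_of_lt ha hmn]
  · rw [if_pos rfl, circleAverage_congr_sphere fun z hz ↦
      malmquistTakenaka_mul_conj_self ha (by simpa using hz) m]
    exact circleAverage_poisson_eq_one (ha m)
  · rw [if_neg hmn.ne']
    calc _ = conj (circleAverage
          (fun z ↦ malmquistTakenaka a m z * conj (malmquistTakenaka a n z)) 0 1) := by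
          rw [← circleAverage_conj]
          simp only [map_mul, conj_conj, mul_comm]
      _ = 0 := by rw [circleAverage_malmquistTakenaka_mul_conj_of_lt ha hmn, map_zero]

/-- The Malmquist–Takenaka system on the torus associated with a sequence `(a_j)` of points of
the open unit disk is orthonormal:
with `B_n(z) = ∏_{0 ≤ j < n} (z − a_j)/(1 − ā_j z)` and
`φ_n(z) = B_n(z)·√(1−|a_n|²)/(1 − ā_n z)`, one has
`(1/2π) ∫_0^{2π} φ_n(e^{iθ}) conj(φ_m(e^{iθ})) dθ = δ_{mn}`. -/
theorem malmquist_takenaka_torus_orthonormal (a : ℕ → ℂ) (ha : ∀ j, ‖a j‖ < 1)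
    (B : ℕ → ℂ → ℂ)
    (hB : ∀ n z, B n z = ∏ j ∈ Finset.range n, (z - a j) / (1 - conj (a j) * z))
    (φ : ℕ → ℂ → ℂ)
    (hφ : ∀ n z, φ n z =
      B n z * (Real.sqrt (1 - ‖a n‖ ^ 2) : ℂ) / (1 - conj (a n) * z)) :
    ∀ m n : ℕ,
      (1 / (2 * (π : ℂ))) *
          ∫ θ : ℝ in (0 : ℝ)..(2 * π),
            φ n (Complex.exp ((θ : ℂ) * I)) * conj (φ m (Complex.exp ((θ : ℂ) * I))) =
        if m = n then 1 else 0 := by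
  obtain rfl : φ = malmquistTakenaka a := by
    funext n z
    rw [hφ, hB]
    rfl
  intro m n
  exact (circleAverage_zero_one_eq_integral_exp _).symm.trans
    (circleAverage_malmquistTakenaka_mul_conj ha m n)
end

section
/- Let φ(x) = Γ(x−1+i)/(√π · Γ(x−i)), where Γ is the complex Gamma function. Then the integer translates of φ form an orthonormal system in L²(ℝ): for all integers m, n, ∫_ℝ φ(x−n) · conj(φ(x−m)) dx equals 1 if m = n and 0 otherwise. -/
/-!
Since `Γ(z + k) = z (z + 1) ⋯ (z + k - 1) Γ(z)`, all Gamma factors cancel in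
`φ(x) · conj φ(x + k)`. For `k = 0` what is left is the Cauchy density
`1 / (π (1 + (x - 1)²))`, of total mass `1`. For `k ≥ 1` it is a rational function `P / Q` with
`deg P = deg Q - 2` whose poles `1 - i - j` are simple and lie in the lower half-plane. Its partial
fraction coefficients then sum to zero, so it is a combination of differences
`1 / (x - a) - 1 / (x - b)` with `a, b` in the lower half-plane, each of which has the primitive
`log ((x - a) / (x - b))`, vanishing at both ends of the real line.
-/

open Complex Real MeasureTheory ComplexConjugate
open Filter Topology Finset Polynomial Lagrange ProbabilityTheory

lemma ofReal_sub_ne_zero_of_im_ne_zero {a : ℂ} (ha : a.im ≠ 0) (x : ℝ) :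
    (x : ℂ) - a ≠ 0 :=
  fun h => ha (by simpa using congrArg im h)

lemma ne_neg_natCast_of_im_ne_zero {z : ℂ} (hz : z.im ≠ 0) (m : ℕ) : z ≠ -m := by
  rintro rfl
  simp at hz

lemma Complex.Gamma_add_nat_eq_prod_mul {z : ℂ} (hz : ∀ m : ℕ, z ≠ -m) (n : ℕ) :
    Complex.Gamma (z + n) = (∏ j ∈ range n, (z + j)) * Complex.Gamma z := by
  induction n with
  | zero => simp
  | succ n ih =>
    have hzn : z + n ≠ 0 := fun h => hz n (eq_neg_of_add_eq_zero_left h)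
    rw [Nat.cast_succ, ← add_assoc, Complex.Gamma_add_one _ hzn, ih, prod_range_succ]
    ring

lemma Complex.div_mem_slitPlane_of_im_pos {u v : ℂ} (hu : 0 < u.im) (hv : 0 < v.im) :
    u / v ∈ slitPlane := by
  rw [mem_slitPlane_iff, or_iff_not_imp_right, not_not]
  intro h
  have hv0 : v ≠ 0 := fun h0 => by simp [h0] at hv
  have him : u.im = (u / v).re * v.im := by
    conv_lhs => rw [← div_mul_cancel₀ u hv0]
    simp [mul_im, h]
  exact pos_of_mul_pos_left (him ▸ hu) hv.le

lemma integrable_inv_normSq_ofReal_sub {a : ℂ} (ha : a.im ≠ 0) :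
    Integrable fun x : ℝ => (normSq ((x : ℂ) - a))⁻¹ := by
  refine ((integrable_cauchyPDFReal a.re (γ := ‖a.im‖₊)).const_mul (π / |a.im|)).congr
    (ae_of_all _ fun x => ?_)
  simp only [cauchyPDFReal_def, coe_nnnorm, Real.norm_eq_abs, sq_abs, normSq_apply, sub_re,
    ofReal_re, sub_im, ofReal_im, zero_sub]
  field_simp

lemma integrable_inv_ofReal_sub_sub_inv_ofReal_sub {a b : ℂ} (ha : a.im ≠ 0) (hb : b.im ≠ 0) :
    Integrable fun x : ℝ => ((x : ℂ) - a)⁻¹ - ((x : ℂ) - b)⁻¹ := by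
  refine (((integrable_inv_normSq_ofReal_sub ha).add
    (integrable_inv_normSq_ofReal_sub hb)).const_mul ‖a - b‖).mono' (by fun_prop)
    (ae_of_all _ fun x => ?_)
  have hxa := ofReal_sub_ne_zero_of_im_ne_zero ha x
  have hxb := ofReal_sub_ne_zero_of_im_ne_zero hb x
  rw [Pi.add_apply, inv_sub_inv hxa hxb, norm_div, norm_mul, normSq_eq_norm_sq,
    normSq_eq_norm_sq, div_eq_mul_inv, mul_inv, norm_sub_rev, sub_sub_sub_cancel_left, norm_sub_rev]
  have hp := inv_nonneg.mpr (norm_nonneg ((x : ℂ) - a))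
  have hq := inv_nonneg.mpr (norm_nonneg ((x : ℂ) - b))
  rw [← inv_pow, ← inv_pow]
  gcongr
  nlinarith [sq_nonneg (‖(x : ℂ) - a‖⁻¹ - ‖(x : ℂ) - b‖⁻¹)]

lemma tendsto_sub_div_sub_cobounded (a b : ℂ) :
    Tendsto (fun z : ℂ => (z - a) / (z - b)) (Bornology.cobounded ℂ) (𝓝 1) := by
  have h := ((tendsto_inv₀_cobounded.comp (tendsto_sub_const_cobounded b)).const_mul
    (b - a)).const_add 1
  rw [mul_zero, add_zero] at h
  refine h.congr' ?_
  filter_upwards [(tendsto_sub_const_cobounded b).eventually_ne_cobounded 0] with z hz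
  simp only [Function.comp_apply]
  field_simp
  ring

lemma integral_inv_ofReal_sub_sub_inv_ofReal_sub {a b : ℂ} (ha : a.im < 0) (hb : b.im < 0) :
    ∫ x : ℝ, (((x : ℂ) - a)⁻¹ - ((x : ℂ) - b)⁻¹) = 0 := by
  have hlim :
      Tendsto (fun z : ℂ => log ((z - a) / (z - b))) (Bornology.cobounded ℂ) (𝓝 0) := by
    simpa [Function.comp_def] using (continuousAt_clog one_mem_slitPlane).tendsto.comp
      (tendsto_sub_div_sub_cobounded a b)
  have hderiv (x : ℝ) :
      HasDerivAt (fun t : ℝ => log (((t : ℂ) - a) / ((t : ℂ) - b)))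
        (((x : ℂ) - a)⁻¹ - ((x : ℂ) - b)⁻¹) x := by
    have hxa := ofReal_sub_ne_zero_of_im_ne_zero ha.ne x
    have hxb := ofReal_sub_ne_zero_of_im_ne_zero hb.ne x
    have h := ((((hasDerivAt_id (x : ℂ)).sub_const a).div ((hasDerivAt_id _).sub_const b)
      hxb).clog (div_mem_slitPlane_of_im_pos (by simpa using ha) (by simpa using hb))).comp_ofReal
    convert h using 1 <;> simp only [id, Pi.div_apply]
    field_simp
  simpa using integral_of_hasDerivAt_of_tendsto hderiv
    (integrable_inv_ofReal_sub_sub_inv_ofReal_sub ha.ne hb.ne)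
    (hlim.comp (RCLike.tendsto_ofReal_atBot_cobounded ℂ))
    (hlim.comp (RCLike.tendsto_ofReal_atTop_cobounded ℂ))

lemma Lagrange.coeff_interpolate_card_sub_one {F ι : Type*} [Field F] [DecidableEq ι]
    {s : Finset ι} {v : ι → F} (r : ι → F) :
    (interpolate s v r).coeff (#s - 1) = ∑ i ∈ s, nodalWeight s v i * r i := by
  rw [interpolate_eq_nodalWeight_mul_nodal_div_X_sub_C, finsetSum_coeff]
  refine sum_congr rfl fun i hi => ?_
  have hmonic := (nodal_monic (s := s.erase i) (v := v)).coeff_natDegree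
  rw [natDegree_nodal, card_erase_of_mem hi] at hmonic
  rw [← nodal_erase_eq_nodal_div hi, coeff_mul_C, coeff_C_mul, hmonic, mul_one]

lemma integral_eval_div_eval_nodal_eq_zero {ι : Type*} [DecidableEq ι] {s : Finset ι}
    {v : ι → ℂ} (hvs : Set.InjOn v s) (hv : ∀ i ∈ s, (v i).im < 0) {P : ℂ[X]}
    (hP : P.degree < ↑(#s - 1)) :
    ∫ x : ℝ, P.eval (x : ℂ) / (nodal s v).eval (x : ℂ) = 0 := by
  set c : ι → ℂ := fun i => nodalWeight s v i * P.eval (v i)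
  have hPs : P.degree < #s := hP.trans_le (by exact_mod_cast Nat.sub_le _ _)
  have hc : ∑ i ∈ s, c i = 0 := by
    rw [← coeff_interpolate_card_sub_one, ← eq_interpolate hvs hPs]
    exact coeff_eq_zero_of_degree_lt hP
  -- Since `∑ c i = 0`, pairing each simple fraction with the same one at `-I` changes nothing but
  -- makes every summand integrable.
  have hpartial (x : ℝ) : P.eval (x : ℂ) / (nodal s v).eval (x : ℂ) =
      ∑ i ∈ s, c i * (((x : ℂ) - v i)⁻¹ - ((x : ℂ) - -I)⁻¹) := by
    have hx : ∀ i ∈ s, (x : ℂ) ≠ v i := fun i hi =>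
      sub_ne_zero.mp (ofReal_sub_ne_zero_of_im_ne_zero (hv i hi).ne x)
    conv_lhs => rw [eq_interpolate hvs hPs]
    rw [eval_interpolate_not_at_node _ hx, mul_div_cancel_left₀ _ (eval_nodal_not_at_node hx)]
    simp_rw [mul_sub, sum_sub_distrib, ← sum_mul, hc, zero_mul, sub_zero]
    exact sum_congr rfl fun i _ => by ring
  simp_rw [hpartial]
  rw [integral_finsetSum _ fun i hi =>
    (integrable_inv_ofReal_sub_sub_inv_ofReal_sub (hv i hi).ne (by simp)).const_mul _]
  refine sum_eq_zero fun i hi => ?_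
  rw [integral_const_mul, integral_inv_ofReal_sub_sub_inv_ofReal_sub (hv i hi) (by simp), mul_zero]

noncomputable def gammaRatio (x : ℝ) : ℂ :=
  Complex.Gamma ((x : ℂ) - 1 + I) / ((Real.sqrt π : ℂ) * Complex.Gamma ((x : ℂ) - I))

lemma conj_gammaRatio (x : ℝ) : conj (gammaRatio x) =
    Complex.Gamma ((x : ℂ) - 1 - I) / ((Real.sqrt π : ℂ) * Complex.Gamma ((x : ℂ) + I)) := by
  simp [gammaRatio, ← Complex.Gamma_conj, sub_eq_add_neg]

lemma ofReal_sqrt_pi_sq : (Real.sqrt π : ℂ) ^ 2 = π := by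
  rw [← ofReal_pow, Real.sq_sqrt pi_pos.le]

lemma ofReal_sqrt_pi_ne_zero : (Real.sqrt π : ℂ) ≠ 0 :=
  ofReal_ne_zero.mpr (Real.sqrt_ne_zero'.mpr pi_pos)

lemma gammaRatio_mul_conj_gammaRatio (a : ℝ) :
    gammaRatio a * conj (gammaRatio a) = (cauchyPDFReal 1 1 a : ℂ) := by
  have hz : ((a : ℂ) - 1 + I) ≠ 0 := fun h => by simpa using congrArg im h
  have hw : ((a : ℂ) - 1 - I) ≠ 0 := fun h => by simpa using congrArg im h
  have hGz : Complex.Gamma ((a : ℂ) - 1 + I) ≠ 0 :=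
    Complex.Gamma_ne_zero (ne_neg_natCast_of_im_ne_zero (by simp))
  have hGw : Complex.Gamma ((a : ℂ) - 1 - I) ≠ 0 :=
    Complex.Gamma_ne_zero (ne_neg_natCast_of_im_ne_zero (by simp))
  have hplus :
      Complex.Gamma ((a : ℂ) + I) = ((a : ℂ) - 1 + I) * Complex.Gamma ((a : ℂ) - 1 + I) := by
    rw [← Complex.Gamma_add_one _ hz]; ring_nf
  have hminus :
      Complex.Gamma ((a : ℂ) - I) = ((a : ℂ) - 1 - I) * Complex.Gamma ((a : ℂ) - 1 - I) := by
    rw [← Complex.Gamma_add_one _ hw]; ring_nf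
  rw [conj_gammaRatio, gammaRatio, hplus, hminus, cauchyPDFReal_def]
  have hnormSq : ((a : ℂ) - 1) ^ 2 + 1 ^ 2 = ((a : ℂ) - 1 + I) * ((a : ℂ) - 1 - I) := by
    linear_combination I_sq
  push_cast
  rw [hnormSq]
  field_simp [ofReal_sqrt_pi_ne_zero]
  rw [ofReal_sqrt_pi_sq]

lemma gammaRatio_mul_conj_gammaRatio_add_succ (a : ℝ) (l : ℕ) :
    gammaRatio a * conj (gammaRatio (a + (l + 1))) =
      (π : ℂ)⁻¹ * ((nodal (range l) fun j => I - j).eval (a : ℂ) /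
        (nodal (range (l + 2)) fun j => 1 - I - j).eval (a : ℂ)) := by
  have hz : ∀ m : ℕ, (a : ℂ) - 1 + I ≠ -m := ne_neg_natCast_of_im_ne_zero (by simp)
  have hw : ∀ m : ℕ, (a : ℂ) - I ≠ -m := ne_neg_natCast_of_im_ne_zero (by simp)
  have hnum : Complex.Gamma (((a + (l + 1) : ℝ) : ℂ) - 1 - I) =
      (∏ j ∈ range l, ((a : ℂ) - (I - j))) * Complex.Gamma ((a : ℂ) - I) := by
    convert Complex.Gamma_add_nat_eq_prod_mul hw l using 2
    · push_cast; ring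
    · exact prod_congr rfl fun j _ => by ring
  have hden : Complex.Gamma (((a + (l + 1) : ℝ) : ℂ) + I) =
      (∏ j ∈ range (l + 2), ((a : ℂ) - (1 - I - j))) * Complex.Gamma ((a : ℂ) - 1 + I) := by
    convert Complex.Gamma_add_nat_eq_prod_mul hz (l + 2) using 2
    · push_cast; ring
    · exact prod_congr rfl fun j _ => by ring
  rw [conj_gammaRatio, hnum, hden, gammaRatio, eval_nodal, eval_nodal]
  field_simp [Complex.Gamma_ne_zero hz, Complex.Gamma_ne_zero hw, ofReal_sqrt_pi_ne_zero]
  rw [ofReal_sqrt_pi_sq]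
  ring

lemma integral_gammaRatio_mul_conj_gammaRatio :
    ∫ a : ℝ, gammaRatio a * conj (gammaRatio a) = 1 := by
  simp_rw [gammaRatio_mul_conj_gammaRatio]
  rw [integral_complex_ofReal, integral_cauchyPDFReal_eq_one _ one_ne_zero, ofReal_one]

lemma integral_gammaRatio_mul_conj_gammaRatio_add_succ (l : ℕ) :
    ∫ a : ℝ, gammaRatio a * conj (gammaRatio (a + (l + 1))) = 0 := by
  simp_rw [gammaRatio_mul_conj_gammaRatio_add_succ]
  rw [integral_const_mul, integral_eval_div_eval_nodal_eq_zero, mul_zero]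
  · intro i _ j _ h
    simpa using congrArg re h
  · simp
  · simp only [degree_nodal, card_range]
    exact_mod_cast Nat.lt_succ_self l

lemma integral_comp_sub_mul_conj_comp_sub (f : ℝ → ℂ) (m n : ℝ) :
    ∫ x, f (x - n) * conj (f (x - m)) = ∫ x, f x * conj (f (x + (n - m))) := by
  rw [← integral_add_right_eq_self _ n]
  simp only [add_sub_cancel_right, add_sub_assoc]

/-- The integer translates of `φ(x) = Γ(x−1+i)/(√π·Γ(x−i))` form an orthonormal system in
`L²(ℝ)`: `∫_ℝ φ(x−n)·conj(φ(x−m)) dx = δ_{mn}` for all integers `m, n`. -/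
theorem gamma_translates_orthonormal (φ : ℝ → ℂ)
    (hφ : ∀ x : ℝ, φ x =
      Complex.Gamma ((x : ℂ) - 1 + I) / ((Real.sqrt π : ℂ) * Complex.Gamma ((x : ℂ) - I))) :
    ∀ m n : ℤ, ∫ x : ℝ, φ (x - n) * conj (φ (x - m)) = if m = n then 1 else 0 := by
  obtain rfl : φ = gammaRatio := funext hφ
  have orthogonal (m n : ℤ) (hmn : m < n) :
      ∫ x : ℝ, gammaRatio (x - n) * conj (gammaRatio (x - m)) = 0 := by
    obtain ⟨l, rfl⟩ := Int.lt.dest hmn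
    rw [integral_comp_sub_mul_conj_comp_sub]
    convert integral_gammaRatio_mul_conj_gammaRatio_add_succ l using 6
    push_cast
    ring
  intro m n
  rcases lt_trichotomy m n with hmn | rfl | hnm
  · rw [if_neg hmn.ne, orthogonal m n hmn]
  · rw [if_pos rfl, integral_comp_sub_mul_conj_comp_sub, sub_self]
    simpa using integral_gammaRatio_mul_conj_gammaRatio
  · rw [if_neg hnm.ne']
    simpa [← integral_conj, mul_comm] using congrArg conj (orthogonal n m hnm)
end

section
/- For every real number x, sin(π(i−x))/sin(π(i+x)) = exp( 2i·( πx + ∑_{n ≥ 1} (e^{−2πn}/n)·sin(2πnx) ) ). In particular the function G(x) := sin(π(i−x))/sin(π(i+x)) has modulus 1 at every real x. -/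
open Complex Real

/-!
Put `z = e^{-2π + 2πix}`, so that `‖z‖ = e^{-2π} < 1`. Both sines factor through `1 - z` and its
conjugate, giving `G(x) = e^{2πix} · conj(1 - z) / (1 - z) = e^{2πix} · e^{-2i arg(1 - z)}`.
Taking imaginary parts in `-log(1 - z) = ∑ zⁿ/n` identifies `-arg(1 - z)` with the series,
because `Im zⁿ = e^{-2πn} sin(2πnx)`.
-/

open ComplexConjugate

namespace Complex

theorem hasSum_im_pow_div_eq_neg_arg {z : ℂ} (hz : ‖z‖ < 1) :
    HasSum (fun n : ℕ => (z ^ (n + 1)).im / (n + 1)) (-arg (1 - z)) := by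
  simpa [log_im, ← ofReal_natCast, ← ofReal_one, ← ofReal_add, div_ofReal_im] using
    hasSum_im (hasSum_taylorSeries_neg_log' hz)

theorem conj_div_self_eq_exp_arg {v : ℂ} (hv : v ≠ 0) :
    conj v / v = exp (-2 * I * arg v) := by
  have hv' : (‖v‖ : ℂ) ≠ 0 := by exact_mod_cast norm_ne_zero_iff.mpr hv
  conv_lhs => rw [← norm_mul_exp_arg_mul_I v]
  rw [map_mul, conj_ofReal, ← exp_conj, map_mul, conj_ofReal, conj_I, mul_div_mul_left _ _ hv',
    div_eq_iff (exp_ne_zero _), ← exp_add]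
  ring_nf

theorem sin_pi_mul_I_add (s : ℂ) :
    sin (π * (I + s)) = exp (π - π * I * s) * (1 - exp (-2 * π + 2 * π * I * s)) * (I / 2) := by
  have h₁ : -(π * (I + s)) * I = π - π * I * s := by linear_combination (-π : ℂ) * I_sq
  have h₂ : π * (I + s) * I = (π - π * I * s) + (-2 * π + 2 * π * I * s) := by
    linear_combination (π : ℂ) * I_sq
  rw [sin, h₁, h₂, exp_add]
  ring

theorem sin_pi_mul_I_sub_div_sin_pi_mul_I_add (x : ℂ) :
    sin (π * (I - x)) / sin (π * (I + x)) =
      exp (2 * π * I * x) *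
        ((1 - exp (-2 * π - 2 * π * I * x)) / (1 - exp (-2 * π + 2 * π * I * x))) := by
  have hshift : exp (π - π * I * -x) = exp (2 * π * I * x) * exp (π - π * I * x) := by
    rw [← exp_add]
    ring_nf
  have hI : (I / 2 : ℂ) ≠ 0 := by simp
  rw [sub_eq_add_neg, sin_pi_mul_I_add, sin_pi_mul_I_add, hshift, mul_div_mul_right _ _ hI,
    mul_assoc, mul_div_assoc, mul_div_mul_left _ _ (exp_ne_zero _)]
  ring_nf

theorem im_exp_ofReal_add_mul_I_pow (a b : ℝ) (n : ℕ) :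
    (exp (a + b * I) ^ n).im = Real.exp (n * a) * Real.sin (n * b) := by
  rw [← exp_nat_mul, exp_im]
  simp

end Complex

/-- For real `x`, `sin(π(i−x))/sin(π(i+x)) = exp(2i(πx + ∑_{n≥1} (e^{−2πn}/n) sin(2πnx)))`;
in particular this quotient has modulus `1` at every real `x`. -/
theorem blaschke_product_phase (x : ℝ) :
    Complex.sin ((π : ℂ) * (I - (x : ℂ))) / Complex.sin ((π : ℂ) * (I + (x : ℂ))) =
      Complex.exp (2 * I * ((π : ℂ) * (x : ℂ) +
        ((∑' n : ℕ, Real.exp (-2 * π * (n + 1)) / (n + 1) * Real.sin (2 * π * (n + 1) * x)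
          : ℝ) : ℂ))) ∧
    ‖(Complex.sin ((π : ℂ) * (I - (x : ℂ))) / Complex.sin ((π : ℂ) * (I + (x : ℂ))))‖ = 1 := by
  set z := exp ((-2 * π : ℝ) + (2 * π * x : ℝ) * I) with hz_def
  have hz : ‖z‖ < 1 := by simp [hz_def, norm_exp, pi_pos]
  have h1z : 1 - z ≠ 0 := sub_ne_zero.mpr fun h => by simp [← h] at hz
  have hsum : ∑' n : ℕ, Real.exp (-2 * π * (n + 1)) / (n + 1) * Real.sin (2 * π * (n + 1) * x)
      = -arg (1 - z) := by
    refine HasSum.tsum_eq ?_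
    convert hasSum_im_pow_div_eq_neg_arg hz using 2 with n
    rw [im_exp_ofReal_add_mul_I_pow]
    push_cast
    ring_nf
  have hphase : sin (π * (I - x)) / sin (π * (I + x)) =
      exp (2 * π * I * x) * exp (-2 * I * arg (1 - z)) := by
    rw [sin_pi_mul_I_sub_div_sin_pi_mul_I_add, ← conj_div_self_eq_exp_arg h1z, map_sub, map_one,
      hz_def, ← exp_conj, map_add, map_mul, conj_ofReal, conj_ofReal, conj_I]
    push_cast
    ring_nf
  have hG : sin (π * (I - x)) / sin (π * (I + x)) =
      exp (((2 * (π * x - arg (1 - z)) : ℝ) : ℂ) * I) := by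
    rw [hphase, ← Complex.exp_add]
    push_cast
    ring_nf
  rw [hsum, hG, norm_exp_ofReal_mul_I]
  refine ⟨?_, rfl⟩
  push_cast
  ring_nf
end

section
/- Define Ξ(t) = ∑_{k ≥ 1} sin(2^{−k} t) and ψ(x) = 2πx + 2·∑_{n ≥ 1} (e^{−2πn}/n)·Ξ(2πnx) for real x. Then ψ is a strictly increasing function on ℝ. -/
open Real

private lemma sin_lip (a b : ℝ) : |Real.sin a - Real.sin b| ≤ |a - b| := by
  rw [Real.sin_sub_sin]
  calc |2 * Real.sin ((a - b) / 2) * Real.cos ((a + b) / 2)|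
      = 2 * |Real.sin ((a - b) / 2)| * |Real.cos ((a + b) / 2)| := by
        rw [abs_mul, abs_mul]; norm_num
    _ ≤ 2 * |(a - b) / 2| * 1 := by
        apply mul_le_mul (mul_le_mul_of_nonneg_left Real.abs_sin_le_abs (by norm_num))
          (Real.abs_cos_le_one _) (abs_nonneg _) (by positivity)
    _ = |a - b| := by rw [mul_one, abs_div, abs_two]; ring

private lemma apow (k : ℕ) : (2 : ℝ) ^ (-(k : ℤ) - 1) = (1 / 2 : ℝ) ^ (k + 1) := by
  have h : (-(k : ℤ) - 1) = -((k + 1 : ℕ) : ℤ) := by push_cast; ring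
  rw [h, zpow_neg, zpow_natCast, one_div, inv_pow]

private lemma geom_half : ∑' k : ℕ, ((1 : ℝ) / 2) ^ (k + 1) = 1 := by
  have h : (fun k : ℕ => ((1 : ℝ) / 2) ^ (k + 1)) = fun k : ℕ => (1 / 2 : ℝ) * (1 / 2) ^ k := by
    funext k; ring
  rw [h, tsum_mul_left, tsum_geometric_two]; norm_num

private lemma summable_geom_half : Summable (fun k : ℕ => ((1 : ℝ) / 2) ^ (k + 1)) := by
  have := (summable_geometric_of_lt_one (by norm_num : (0:ℝ) ≤ 1/2) (by norm_num)).mul_left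
    ((1:ℝ)/2)
  simpa [pow_succ, mul_comm] using this

private lemma summable_sin (t : ℝ) :
    Summable (fun k : ℕ => Real.sin ((2 : ℝ) ^ (-(k : ℤ) - 1) * t)) := by
  apply Summable.of_abs
  have hb : ∀ k : ℕ, |Real.sin ((2 : ℝ) ^ (-(k : ℤ) - 1) * t)| ≤ ((1:ℝ)/2)^(k+1) * |t| := by
    intro k
    have h := sin_lip ((2 : ℝ) ^ (-(k : ℤ) - 1) * t) 0
    simp only [Real.sin_zero, sub_zero] at h
    refine h.trans_eq ?_
    rw [abs_mul, apow k, abs_of_pos (by positivity : (0:ℝ) < (1/2:ℝ)^(k+1))]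
  exact Summable.of_nonneg_of_le (fun k => abs_nonneg _) hb (summable_geom_half.mul_right _)

private lemma Xi_lip (t s : ℝ) :
    |(∑' k : ℕ, Real.sin ((2 : ℝ) ^ (-(k : ℤ) - 1) * t)) -
      ∑' k : ℕ, Real.sin ((2 : ℝ) ^ (-(k : ℤ) - 1) * s)| ≤ |t - s| := by
  rw [← Summable.tsum_sub (summable_sin t) (summable_sin s)]
  have hb : ∀ k : ℕ, |Real.sin ((2 : ℝ) ^ (-(k : ℤ) - 1) * t) -
      Real.sin ((2 : ℝ) ^ (-(k : ℤ) - 1) * s)| ≤ ((1:ℝ)/2)^(k+1) * |t - s| := by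
    intro k
    calc |Real.sin ((2 : ℝ) ^ (-(k : ℤ) - 1) * t) - Real.sin ((2 : ℝ) ^ (-(k : ℤ) - 1) * s)|
        ≤ |(2 : ℝ) ^ (-(k : ℤ) - 1) * t - (2 : ℝ) ^ (-(k : ℤ) - 1) * s| := sin_lip _ _
      _ = ((1:ℝ)/2)^(k+1) * |t - s| := by
          rw [← mul_sub, abs_mul, apow k, abs_of_pos (by positivity)]
  have hsum : Summable (fun k : ℕ => |Real.sin ((2 : ℝ) ^ (-(k : ℤ) - 1) * t) -
      Real.sin ((2 : ℝ) ^ (-(k : ℤ) - 1) * s)|) :=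
    Summable.of_nonneg_of_le (fun k => abs_nonneg _) hb (summable_geom_half.mul_right _)
  calc |∑' k : ℕ, (Real.sin ((2 : ℝ) ^ (-(k : ℤ) - 1) * t) -
        Real.sin ((2 : ℝ) ^ (-(k : ℤ) - 1) * s))|
      ≤ ∑' k : ℕ, |Real.sin ((2 : ℝ) ^ (-(k : ℤ) - 1) * t) -
        Real.sin ((2 : ℝ) ^ (-(k : ℤ) - 1) * s)| := by
        simpa using norm_tsum_le_tsum_norm (f := fun k : ℕ =>
          Real.sin ((2 : ℝ) ^ (-(k : ℤ) - 1) * t) - Real.sin ((2 : ℝ) ^ (-(k : ℤ) - 1) * s))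
          (by simpa using hsum)
    _ ≤ ∑' k : ℕ, ((1:ℝ)/2)^(k+1) * |t - s| :=
        Summable.tsum_le_tsum hb hsum (summable_geom_half.mul_right _)
    _ = |t - s| := by rw [tsum_mul_right, geom_half, one_mul]

/-- With `Ξ(t) = ∑_{k≥1} sin(2^{−k}t)` and
`ψ(x) = 2πx + 2∑_{n≥1} (e^{−2πn}/n)·Ξ(2πnx)`, the function `ψ` is strictly increasing on `ℝ`. -/
theorem phase_strictMono (Ξ : ℝ → ℝ)
    (hΞ : ∀ t : ℝ, Ξ t = ∑' k : ℕ, Real.sin ((2 : ℝ) ^ (-(k : ℤ) - 1) * t))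
    (ψ : ℝ → ℝ)
    (hψ : ∀ x : ℝ, ψ x =
      2 * π * x + 2 * ∑' n : ℕ, Real.exp (-2 * π * (n + 1)) / (n + 1) * Ξ (2 * π * (n + 1) * x)) :
    StrictMono ψ := by
  -- basic estimates
  have hΞlip : ∀ t s : ℝ, |Ξ t - Ξ s| ≤ |t - s| := by
    intro t s; rw [hΞ t, hΞ s]; exact Xi_lip t s
  set r : ℝ := Real.exp (-2 * π) with hr
  have hr0 : 0 < r := Real.exp_pos _
  have hr3 : r < 1 / 3 := by
    have h1 : Real.exp (-2 * π) ≤ Real.exp (-6) := by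
      apply Real.exp_le_exp.mpr
      have := Real.pi_gt_three
      nlinarith
    have h2 : (3:ℝ) < Real.exp 6 := by nlinarith [Real.add_one_le_exp 6]
    have hm : Real.exp (-6) * Real.exp 6 = 1 := by
      rw [← Real.exp_add]; norm_num
    have h3 : Real.exp (-6) < 1 / 3 := by
      nlinarith [Real.exp_pos (-6), Real.exp_pos 6]
    linarith
  have hr1 : r < 1 := by linarith
  -- exp(-2π(n+1)) = r^(n+1)
  have hrn : ∀ n : ℕ, Real.exp (-2 * π * (n + 1)) = r ^ (n + 1) := by
    intro n
    rw [hr, ← Real.exp_nat_mul]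
    congr 1
    push_cast; ring
  have hsum_r : Summable (fun n : ℕ => r ^ (n + 1)) := by
    have := (summable_geometric_of_lt_one hr0.le hr1).mul_left r
    simpa [pow_succ, mul_comm] using this
  have htsum_r : ∑' n : ℕ, r ^ (n + 1) = r / (1 - r) := by
    have h : (fun n : ℕ => r ^ (n + 1)) = fun n : ℕ => r * r ^ n := by
      funext n; ring
    rw [h, tsum_mul_left, tsum_geometric_of_lt_one hr0.le hr1]
    field_simp
  -- the series terms
  intro x y hxy
  set f : ℕ → ℝ → ℝ := fun n z => Real.exp (-2 * π * (n + 1)) / (n + 1) * Ξ (2 * π * (n + 1) * z)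
    with hf
  have hπ : (0:ℝ) < π := Real.pi_pos
  -- termwise Lipschitz bound
  have hterm : ∀ (n : ℕ) (a b : ℝ), |f n a - f n b| ≤ 2 * π * r ^ (n + 1) * |a - b| := by
    intro n a b
    have hn1 : (0:ℝ) < (n:ℝ) + 1 := by positivity
    simp only [hf]
    rw [← mul_sub, abs_mul, abs_div, abs_of_pos (Real.exp_pos _), abs_of_pos hn1]
    have h1 : |Ξ (2 * π * (n + 1) * a) - Ξ (2 * π * (n + 1) * b)| ≤
        2 * π * (n + 1) * |a - b| := by
      calc |Ξ (2 * π * (n + 1) * a) - Ξ (2 * π * (n + 1) * b)|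
          ≤ |2 * π * (n + 1) * a - 2 * π * (n + 1) * b| := hΞlip _ _
        _ = 2 * π * (n + 1) * |a - b| := by
            rw [← mul_sub, abs_mul, abs_of_pos (by positivity)]
    calc Real.exp (-2 * π * (n + 1)) / (n + 1) *
          |Ξ (2 * π * (n + 1) * a) - Ξ (2 * π * (n + 1) * b)|
        ≤ Real.exp (-2 * π * (n + 1)) / (n + 1) * (2 * π * (n + 1) * |a - b|) := by
          apply mul_le_mul_of_nonneg_left h1 (by positivity)
      _ = 2 * π * r ^ (n + 1) * |a - b| := by
          rw [hrn n]; field_simp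
  -- summability of f n z for any z
  have hsumf : ∀ z : ℝ, Summable (fun n : ℕ => f n z) := by
    intro z
    apply Summable.of_abs
    have hb : ∀ n : ℕ, |f n z| ≤ 2 * π * r ^ (n + 1) * |z| := by
      intro n
      have h := hterm n z 0
      have hf0 : f n 0 = 0 := by
        simp only [hf, hΞ]
        simp
      rw [hf0, sub_zero, sub_zero] at h
      exact h
    exact Summable.of_nonneg_of_le (fun n => abs_nonneg _) hb
      ((hsum_r.mul_left (2 * π)).mul_right _)
  -- bound on difference of sums
  have hSdiff : |(∑' n : ℕ, f n y) - ∑' n : ℕ, f n x| ≤ 2 * π * (r / (1 - r)) * |y - x| := by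
    rw [← Summable.tsum_sub (hsumf y) (hsumf x)]
    have hb : ∀ n : ℕ, |f n y - f n x| ≤ 2 * π * r ^ (n + 1) * |y - x| := fun n => hterm n y x
    have habs : Summable (fun n : ℕ => |f n y - f n x|) :=
      Summable.of_nonneg_of_le (fun n => abs_nonneg _) hb
        ((hsum_r.mul_left (2 * π)).mul_right _)
    calc |∑' n : ℕ, (f n y - f n x)| ≤ ∑' n : ℕ, |f n y - f n x| := by
          simpa using norm_tsum_le_tsum_norm (f := fun n : ℕ => f n y - f n x)
            (by simpa using habs)
      _ ≤ ∑' n : ℕ, 2 * π * r ^ (n + 1) * |y - x| :=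
          Summable.tsum_le_tsum hb habs ((hsum_r.mul_left (2 * π)).mul_right _)
      _ = 2 * π * (r / (1 - r)) * |y - x| := by
          have : (fun n : ℕ => 2 * π * r ^ (n + 1) * |y - x|) =
              fun n : ℕ => (2 * π * |y - x|) * r ^ (n + 1) := by
            funext n; ring
          rw [this, tsum_mul_left, htsum_r]; ring
  -- conclude
  have hxy' : 0 < y - x := by linarith
  have habs_yx : |y - x| = y - x := abs_of_pos hxy'
  have h1r : 0 < 1 - r := by linarith
  have hkey : 2 * π * (r / (1 - r)) < π := by
    have hd : r / (1 - r) < 1 / 2 := by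
      rw [div_lt_iff₀ h1r]; linarith
    nlinarith [hπ]
  have hfx : ∀ z : ℝ,
      (∑' n : ℕ, Real.exp (-2 * π * (n + 1)) / (n + 1) * Ξ (2 * π * (n + 1) * z)) =
        ∑' n : ℕ, f n z := fun z => rfl
  have hS := hSdiff
  rw [habs_yx] at hS
  have hlow : -(2 * π * (r / (1 - r)) * (y - x)) ≤ (∑' n : ℕ, f n y) - ∑' n : ℕ, f n x :=
    neg_le_of_abs_le hS
  have : ψ x < ψ y := by
    rw [hψ x, hψ y, hfx x, hfx y]
    nlinarith [hxy', hkey, hlow]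
  exact this
end

section
/- For every real number x, with G(x) = sin(π(i−x))/sin(π(i+x)), the series ∑_{n ≥ 0} (−1)^n · e^{−2nπ} · G(x)^{n+1} converges absolutely and e^{2iπx} = e^{−2π} + (1 − e^{−4π}) · ∑_{n ≥ 0} (−1)^n · e^{−2nπ} · G(x)^{n+1}. -/
/-!
With `q = e^{-2π}` and `w = e^{2iπx}`, multiplying numerator and denominator of `G(x)` by
`-2i e^{iπ(i+x)}` turns it into the Blaschke factor `(w - q) / (1 - q w)`, which has modulus one
on the unit circle. The series is therefore geometric with ratio `-q G(x)` and sums to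
`G(x) / (1 + q G(x))`, and inverting the Möbius map `w ↦ (w - q) / (1 - q w)` gives
`w = q + (1 - q²) G(x) / (1 + q G(x))`.
-/

open Complex Real

theorem sin_sub_div_sin_add (a z : ℂ) :
    Complex.sin (a - z) / Complex.sin (a + z) =
      (exp (2 * z * I) - exp (2 * a * I)) / (1 - exp (2 * a * I) * exp (2 * z * I)) := by
  set A := exp (a * I)
  set Z := exp (z * I)
  rw [← mul_div_mul_left _ _ (by simp [A, Z] : A * Z * (-2 * I) ≠ 0), Complex.sin, Complex.sin]
  congr 1
  · have e₁ : exp (-(a - z) * I) * (A * Z) = exp (2 * z * I) := by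
      rw [← Complex.exp_add, ← Complex.exp_add]; congr 1; ring
    have e₂ : exp ((a - z) * I) * (A * Z) = exp (2 * a * I) := by
      rw [← Complex.exp_add, ← Complex.exp_add]; congr 1; ring
    linear_combination e₁ - e₂ - A * Z * (exp (-(a - z) * I) - exp ((a - z) * I)) * I_mul_I
  · have e₁ : exp (-(a + z) * I) * (A * Z) = 1 := by
      rw [← Complex.exp_add, ← Complex.exp_add, ← Complex.exp_zero]; congr 1; ring
    have e₂ : exp ((a + z) * I) * (A * Z) = exp (2 * a * I) * exp (2 * z * I) := by
      rw [← Complex.exp_add, ← Complex.exp_add, ← Complex.exp_add]; congr 1; ring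
    linear_combination e₁ - e₂ - A * Z * (exp (-(a + z) * I) - exp ((a + z) * I)) * I_mul_I

theorem norm_sub_div_one_sub_mul {q : ℝ} {w : ℂ} (hq : |q| < 1) (hw : ‖w‖ = 1) :
    ‖(w - q) / (1 - q * w)‖ = 1 := by
  have hcf : (w - q) / (1 - q * w) = (canonicalFactor 1 q w)⁻¹ := by
    simp [canonicalFactor_apply]
  rw [hcf, norm_inv, norm_canonicalFactor_eval_circle_eq_one] <;> simp [hq, hw]

theorem add_one_sub_sq_mul_div_one_add_mul {K : Type*} [Field K] {q w : K}
    (hqw : 1 - q * w ≠ 0) (hq : 1 - q ^ 2 ≠ 0) :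
    q + (1 - q ^ 2) * ((w - q) / (1 - q * w) / (1 + q * ((w - q) / (1 - q * w)))) = w := by
  have h : 1 + q * ((w - q) / (1 - q * w)) = (1 - q ^ 2) / (1 - q * w) := by
    field_simp; ring
  rw [h]
  field_simp
  ring

section AlternatingGeometric

variable {q g : ℂ}

theorem neg_one_pow_mul_pow_mul_pow_succ (n : ℕ) :
    (-1) ^ n * q ^ n * g ^ (n + 1) = g * (-(q * g)) ^ n := by
  ring

theorem hasSum_neg_one_pow_mul_pow_mul_pow_succ (h : ‖q * g‖ < 1) :
    HasSum (fun n : ℕ => (-1) ^ n * q ^ n * g ^ (n + 1)) (g / (1 + q * g)) := by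
  simp only [neg_one_pow_mul_pow_mul_pow_succ]
  rw [div_eq_mul_inv, ← sub_neg_eq_add]
  exact (hasSum_geometric_of_norm_lt_one (by rwa [norm_neg])).mul_left g

theorem summable_norm_neg_one_pow_mul_pow_mul_pow_succ (h : ‖q * g‖ < 1) :
    Summable (fun n : ℕ => ‖(-1) ^ n * q ^ n * g ^ (n + 1)‖) := by
  simp only [neg_one_pow_mul_pow_mul_pow_succ, norm_mul]
  exact (summable_norm_geometric_of_norm_lt_one (by rwa [norm_neg])).mul_left ‖g‖

end AlternatingGeometric

/-- The explicit phase-unwinding series of `e^{2iπx}`: for real `x`, with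
`G(x) = sin(π(i−x))/sin(π(i+x))`, the series `∑_{n≥0} (−1)^n e^{−2nπ} G(x)^{n+1}` converges
absolutely and `e^{2iπx} = e^{−2π} + (1 − e^{−4π})·∑_{n≥0} (−1)^n e^{−2nπ} G(x)^{n+1}`. -/
theorem exp_unwinding_series (G : ℝ → ℂ)
    (hG : ∀ x : ℝ,
      G x = Complex.sin ((π : ℂ) * (I - (x : ℂ))) / Complex.sin ((π : ℂ) * (I + (x : ℂ))))
    (x : ℝ) :
    Summable (fun n : ℕ =>
      ‖(-1 : ℂ) ^ n * Complex.exp (-2 * (n : ℂ) * (π : ℂ)) * G x ^ (n + 1)‖) ∧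
    Complex.exp (2 * I * (π : ℂ) * (x : ℂ)) =
      Complex.exp (-2 * (π : ℂ)) + (1 - Complex.exp (-4 * (π : ℂ))) *
        ∑' n : ℕ, (-1 : ℂ) ^ n * Complex.exp (-2 * (n : ℂ) * (π : ℂ)) * G x ^ (n + 1) := by
  set q : ℝ := Real.exp (-2 * π)
  set w : ℂ := Complex.exp (2 * I * π * x) with hw_def
  have hq : |q| < 1 := by
    rw [abs_of_pos (Real.exp_pos _), Real.exp_lt_one_iff]; linarith [Real.pi_pos]
  have hw : ‖w‖ = 1 := by
    rw [hw_def, show 2 * I * π * x = ((2 * π * x : ℝ) : ℂ) * I by push_cast; ring,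
      norm_exp_ofReal_mul_I]
  have hq_pow : ∀ n : ℕ, Complex.exp (-2 * n * π) = (q : ℂ) ^ n := by
    intro n
    rw [show -2 * (n : ℂ) * π = n * (-2 * π) by ring, Complex.exp_nat_mul, Complex.ofReal_exp]
    push_cast; rfl
  have hq_one : Complex.exp (-2 * π) = q := by simpa using hq_pow 1
  have hq_two : Complex.exp (-4 * π) = (q : ℂ) ^ 2 := by rw [← hq_pow 2]; norm_num
  have hGx : G x = (w - q) / (1 - q * w) := by
    rw [hG, mul_sub, mul_add, sin_sub_div_sin_add, ← hq_one, hw_def,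
      show 2 * (π * I) * I = -2 * (π : ℂ) by linear_combination (2 * π : ℂ) * I_mul_I,
      show 2 * ((π : ℂ) * x) * I = 2 * I * π * x by ring]
  have hqG : ‖(q : ℂ) * G x‖ < 1 := by
    rwa [norm_mul, hGx, norm_sub_div_one_sub_mul hq hw, mul_one, norm_real, Real.norm_eq_abs]
  have hqw : 1 - (q : ℂ) * w ≠ 0 :=
    sub_ne_zero.2 (ne_of_apply_ne norm (by simpa [hw] using hq.ne'))
  have hq2 : 1 - (q : ℂ) ^ 2 ≠ 0 := by
    exact_mod_cast sub_ne_zero.2 (sq_lt_one_iff_abs_lt_one q |>.2 hq).ne'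
  simp only [hq_pow, hq_one, hq_two]
  refine ⟨summable_norm_neg_one_pow_mul_pow_mul_pow_succ hqG, ?_⟩
  rw [(hasSum_neg_one_pow_mul_pow_mul_pow_succ hqG).tsum_eq, hGx,
    add_one_sub_sq_mul_div_one_add_mul hqw hq2]
end
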